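/- arXiv:2408.13772 — 3 statements merged into one kernel-verified Lean document; each statement's English description precedes it below -/
import Mathlib

section
/- Consider a finite capacitated bipartite assignment instance. If S and T are both feasible item sets and |S| < |T|, then there exists an item x ∈ T \ S such that S ∪ {x} is again a feasible item set. (Exchange/augmentation property of the capacitated transversal system underlying the MCMF network of the blocking analysis.) -/
/-- A set `S` of items is feasible (matchable) in the capacitated bipartite
assignment instance given by capacities `cap : ε → ℕ` and adjacency
`Adj : ι → ε → Prop` if there is an assignment `φ` sending each item of `S`
to an adjacent effect, with each effect `e` receiving at most `cap e` items. -/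
def Feasible {ι ε : Type*} [DecidableEq ε] (cap : ε → ℕ) (Adj : ι → ε → Prop)
    (S : Finset ι) : Prop :=
  ∃ φ : ι → ε, (∀ x ∈ S, Adj x (φ x)) ∧
    ∀ e : ε, (S.filter (fun x => φ x = e)).card ≤ cap e


open Classical in
/-- Neighborhood of a set of items: effects adjacent to some item of `A`. -/
noncomputable def nbr {ι ε : Type*} [Fintype ε] (Adj : ι → ε → Prop) (A : Finset ι) :
    Finset ε :=
  Finset.univ.filter (fun e => ∃ a ∈ A, Adj a e)

lemma mem_nbr {ι ε : Type*} [Fintype ε] (Adj : ι → ε → Prop) (A : Finset ι) (e : ε) :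
    e ∈ nbr Adj A ↔ ∃ a ∈ A, Adj a e := by
  classical
  simp [nbr]

lemma nbr_mono {ι ε : Type*} [Fintype ε] (Adj : ι → ε → Prop) {A B : Finset ι}
    (h : A ⊆ B) : nbr Adj A ⊆ nbr Adj B := by
  intro e he
  rw [mem_nbr] at he ⊢
  obtain ⟨a, ha, hae⟩ := he
  exact ⟨a, h ha, hae⟩

lemma nbr_union {ι ε : Type*} [Fintype ε] [DecidableEq ι] [DecidableEq ε]
    (Adj : ι → ε → Prop) (A B : Finset ι) :
    nbr Adj (A ∪ B) = nbr Adj A ∪ nbr Adj B := by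
  ext e
  simp only [mem_nbr, Finset.mem_union]
  constructor
  · rintro ⟨a, ha | ha, hae⟩
    · exact Or.inl ⟨a, ha, hae⟩
    · exact Or.inr ⟨a, ha, hae⟩
  · rintro (⟨a, ha, hae⟩ | ⟨a, ha, hae⟩)
    · exact ⟨a, Or.inl ha, hae⟩
    · exact ⟨a, Or.inr ha, hae⟩

/-- Easy direction of the capacitated Hall condition. -/
lemma hall_of_feasible {ι ε : Type*} [Fintype ε] [DecidableEq ι] [DecidableEq ε]
    (cap : ε → ℕ) (Adj : ι → ε → Prop) (S : Finset ι)
    (hS : Feasible cap Adj S) :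
    ∀ A ⊆ S, A.card ≤ ∑ e ∈ nbr Adj A, cap e := by
  obtain ⟨φ, hφ, hcap⟩ := hS
  intro A hA
  have hfib : A.card = ∑ e ∈ nbr Adj A, (A.filter (fun x => φ x = e)).card := by
    refine Finset.card_eq_sum_card_fiberwise ?_
    intro x hx
    exact (mem_nbr _ _ _).2 ⟨x, hx, hφ x (hA hx)⟩
  rw [hfib]
  refine Finset.sum_le_sum fun e _ => ?_
  exact le_trans (Finset.card_le_card (Finset.filter_subset_filter _ hA)) (hcap e)

/-- Hard direction: the capacitated Hall condition implies feasibility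
(given some default function `ι → ε`). -/
lemma feasible_of_hall {ι ε : Type*} [Fintype ε] [DecidableEq ι] [DecidableEq ε]
    (cap : ε → ℕ) (Adj : ι → ε → Prop) (S : Finset ι) (φ₀ : ι → ε)
    (hhall : ∀ A ⊆ S, A.card ≤ ∑ e ∈ nbr Adj A, cap e) :
    Feasible cap Adj S := by
  classical
  set t : {x : ι // x ∈ S} → Finset (Σ e : ε, Fin (cap e)) :=
    fun x => Finset.univ.filter (fun p : Σ e : ε, Fin (cap e) => Adj x.1 p.1) with ht
  have hbiUnion : ∀ s : Finset {x : ι // x ∈ S},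
      s.biUnion t = (nbr Adj (s.image Subtype.val)).sigma (fun e => Finset.univ) := by
    intro s
    ext p
    obtain ⟨e, i⟩ := p
    simp only [Finset.mem_biUnion, ht, Finset.mem_filter, Finset.mem_univ, true_and,
      Finset.mem_sigma, and_true, mem_nbr, Finset.mem_image]
    constructor
    · rintro ⟨x, hx, hadj⟩
      exact ⟨x.1, ⟨x, hx, rfl⟩, hadj⟩
    · rintro ⟨a, ⟨x, hx, rfl⟩, hadj⟩
      exact ⟨x, hx, hadj⟩
  have key : ∀ s : Finset {x : ι // x ∈ S}, s.card ≤ (s.biUnion t).card := by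
    intro s
    rw [hbiUnion s, Finset.card_sigma]
    simp only [Finset.card_univ, Fintype.card_fin]
    have : s.card = (s.image Subtype.val).card :=
      (Finset.card_image_of_injective s Subtype.val_injective).symm
    rw [this]
    refine hhall _ ?_
    intro a ha
    obtain ⟨x, _, rfl⟩ := Finset.mem_image.1 ha
    exact x.2
  obtain ⟨f, hfinj, hf⟩ := (Finset.all_card_le_biUnion_card_iff_exists_injective t).1 key
  refine ⟨fun x => if h : x ∈ S then (f ⟨x, h⟩).1 else φ₀ x, ?_, ?_⟩
  · intro x hx
    beta_reduce
    rw [dif_pos hx]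
    have := hf ⟨x, hx⟩
    simpa [ht] using this
  · intro e
    beta_reduce
    rcases (S.filter (fun x => (if h : x ∈ S then (f ⟨x, h⟩).1 else φ₀ x) = e)).eq_empty_or_nonempty
      with hemp | ⟨x₀, hx₀⟩
    · simp [hemp]
    · have hx₀S : x₀ ∈ S := (Finset.mem_filter.1 hx₀).1
      haveI : Nonempty (Σ e : ε, Fin (cap e)) := ⟨f ⟨x₀, hx₀S⟩⟩
      have hle : (S.filter (fun x => (if h : x ∈ S then (f ⟨x, h⟩).1 else φ₀ x) = e)).card
          ≤ ((Finset.univ : Finset (Σ e : ε, Fin (cap e))).filter (fun p => p.1 = e)).card := by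
        refine Finset.card_le_card_of_injOn
          (fun x => if h : x ∈ S then f ⟨x, h⟩ else Classical.arbitrary (Σ e : ε, Fin (cap e))) ?_ ?_
        · intro x hx
          have hxS : x ∈ S := (Finset.mem_filter.1 hx).1
          have hxe : (f ⟨x, hxS⟩).1 = e := by
            have := (Finset.mem_filter.1 hx).2
            rwa [dif_pos hxS] at this
          simp [dif_pos hxS, hxe]
        · intro x hx y hy hxy
          have hxS : x ∈ S := (Finset.mem_filter.1 hx).1
          have hyS : y ∈ S := (Finset.mem_filter.1 hy).1
          simp only [dif_pos hxS, dif_pos hyS] at hxy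
          have := hfinj hxy
          exact Subtype.ext_iff.1 this
      have hcount : ((Finset.univ : Finset (Σ e : ε, Fin (cap e))).filter (fun p => p.1 = e)).card = cap e := by
        have : (Finset.univ : Finset (Σ e : ε, Fin (cap e))).filter (fun p => p.1 = e)
            = ({e} : Finset ε).sigma (fun _ => Finset.univ) := by
          ext p
          obtain ⟨e', i⟩ := p
          simp only [Finset.mem_filter, Finset.mem_univ, true_and, Finset.mem_sigma,
            Finset.mem_singleton, and_true]
        rw [this, Finset.card_sigma]
        simp
      omega

/-- A subset of `S` is tight if its Hall bound is attained. -/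
def Tight {ι ε : Type*} [Fintype ε] (cap : ε → ℕ) (Adj : ι → ε → Prop)
    (S A : Finset ι) : Prop :=
  A ⊆ S ∧ A.card = ∑ e ∈ nbr Adj A, cap e

lemma nbr_empty {ι ε : Type*} [Fintype ε] (Adj : ι → ε → Prop) :
    nbr Adj (∅ : Finset ι) = ∅ := by
  ext e
  simp [mem_nbr]

lemma tight_empty {ι ε : Type*} [Fintype ε] (cap : ε → ℕ) (Adj : ι → ε → Prop)
    (S : Finset ι) : Tight cap Adj S ∅ := by
  refine ⟨Finset.empty_subset _, ?_⟩
  simp [nbr_empty]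

lemma tight_union {ι ε : Type*} [Fintype ε] [DecidableEq ι] [DecidableEq ε]
    (cap : ε → ℕ) (Adj : ι → ε → Prop) (S : Finset ι)
    (hhall : ∀ A ⊆ S, A.card ≤ ∑ e ∈ nbr Adj A, cap e)
    {A B : Finset ι} (hA : Tight cap Adj S A) (hB : Tight cap Adj S B) :
    Tight cap Adj S (A ∪ B) := by
  have hsub : A ∪ B ⊆ S := Finset.union_subset hA.1 hB.1
  have h5 : nbr Adj (A ∪ B) = nbr Adj A ∪ nbr Adj B := nbr_union Adj A B
  have h3 : nbr Adj (A ∩ B) ⊆ nbr Adj A ∩ nbr Adj B := by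
    intro e he
    rw [mem_nbr] at he
    obtain ⟨a, ha, hae⟩ := he
    rw [Finset.mem_inter] at ha
    exact Finset.mem_inter.2 ⟨(mem_nbr _ _ _).2 ⟨a, ha.1, hae⟩,
      (mem_nbr _ _ _).2 ⟨a, ha.2, hae⟩⟩
  have e1 : (A ∪ B).card + (A ∩ B).card = A.card + B.card :=
    Finset.card_union_add_card_inter A B
  have e2 : ∑ e ∈ nbr Adj A ∪ nbr Adj B, cap e + ∑ e ∈ nbr Adj A ∩ nbr Adj B, cap e
      = ∑ e ∈ nbr Adj A, cap e + ∑ e ∈ nbr Adj B, cap e :=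
    Finset.sum_union_inter
  have e3 := hhall (A ∪ B) hsub
  rw [h5] at e3
  have e4 := hhall (A ∩ B) (fun x hx => hA.1 (Finset.mem_inter.1 hx).1)
  have e5 : ∑ e ∈ nbr Adj (A ∩ B), cap e ≤ ∑ e ∈ nbr Adj A ∩ nbr Adj B, cap e :=
    Finset.sum_le_sum_of_subset h3
  have hA2 := hA.2
  have hB2 := hB.2
  refine ⟨hsub, ?_⟩
  rw [h5]
  omega

lemma tight_biUnion {ι ε κ : Type*} [Fintype ε] [DecidableEq ι] [DecidableEq ε]
    [DecidableEq κ]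
    (cap : ε → ℕ) (Adj : ι → ε → Prop) (S : Finset ι)
    (hhall : ∀ A ⊆ S, A.card ≤ ∑ e ∈ nbr Adj A, cap e)
    (F : Finset κ) (B : κ → Finset ι) (hB : ∀ x ∈ F, Tight cap Adj S (B x)) :
    Tight cap Adj S (F.biUnion B) := by
  classical
  induction F using Finset.induction_on with
  | empty => simpa using tight_empty cap Adj S
  | insert _ _ hx ih =>
    rw [Finset.biUnion_insert]
    exact tight_union cap Adj S hhall (hB _ (Finset.mem_insert_self _ _))
      (ih fun x hxF => hB x (Finset.mem_insert_of_mem hxF))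

/-- Exchange/augmentation property: if `S` and `T` are both feasible item sets and
`|S| < |T|`, then some item `x ∈ T \ S` can be added to `S` keeping feasibility. -/
theorem feasible_exchange {ι ε : Type*} [Fintype ι] [Fintype ε]
    [DecidableEq ι] [DecidableEq ε]
    (cap : ε → ℕ) (Adj : ι → ε → Prop) (S T : Finset ι)
    (hS : Feasible cap Adj S) (hT : Feasible cap Adj T)
    (hcard : S.card < T.card) :
    ∃ x ∈ T \ S, Feasible cap Adj (insert x S) := by
  classical
  by_contra hcon
  push_neg at hcon
  obtain ⟨φ₀, -, -⟩ := id hS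
  have hhallS := hall_of_feasible cap Adj S hS
  have hhallT := hall_of_feasible cap Adj T hT
  -- For each x ∈ T \ S, extract a tight set B with N(x) having zero extra capacity
  have key : ∀ x ∈ T \ S, ∃ B : Finset ι, Tight cap Adj S B ∧
      ∀ e : ε, Adj x e → e ∉ nbr Adj B → cap e = 0 := by
    intro x hx
    have hnotfeas := hcon x hx
    have hxS : x ∉ S := (Finset.mem_sdiff.1 hx).2
    -- insert x S fails Hall
    have hfail : ¬ ∀ A ⊆ insert x S, A.card ≤ ∑ e ∈ nbr Adj A, cap e := by
      intro h
      exact hnotfeas (feasible_of_hall cap Adj (insert x S) φ₀ h)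
    push_neg at hfail
    obtain ⟨A, hAsub, hAcard⟩ := hfail
    have hxA : x ∈ A := by
      by_contra hxA
      have : A ⊆ S := by
        intro a ha
        rcases Finset.mem_insert.1 (hAsub ha) with rfl | h
        · exact absurd ha hxA
        · exact h
      exact absurd (hhallS A this) (not_le.2 hAcard)
    set B := A.erase x with hBdef
    have hBsub : B ⊆ S := by
      intro a ha
      have haA : a ∈ A := Finset.erase_subset _ _ ha
      have hax : a ≠ x := Finset.ne_of_mem_erase ha
      rcases Finset.mem_insert.1 (hAsub haA) with rfl | h
      · exact absurd rfl hax
      · exact h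
    have hcardA : A.card = B.card + 1 := by
      rw [hBdef, Finset.card_erase_of_mem hxA]
      have : 1 ≤ A.card := Finset.card_pos.2 ⟨x, hxA⟩
      omega
    have hNBsub : nbr Adj B ⊆ nbr Adj A := nbr_mono Adj (Finset.erase_subset _ _)
    have h1 : B.card ≤ ∑ e ∈ nbr Adj B, cap e := hhallS B hBsub
    have h2 : ∑ e ∈ nbr Adj B, cap e ≤ ∑ e ∈ nbr Adj A, cap e :=
      Finset.sum_le_sum_of_subset hNBsub
    have htightB : Tight cap Adj S B := ⟨hBsub, by omega⟩
    have hNeq : ∑ e ∈ nbr Adj A, cap e = ∑ e ∈ nbr Adj B, cap e := by omega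
    refine ⟨B, htightB, ?_⟩
    intro e hadj heB
    have heA : e ∈ nbr Adj A := (mem_nbr _ _ _).2 ⟨x, hxA, hadj⟩
    have hsdiff : ∑ e ∈ nbr Adj A \ nbr Adj B, cap e +
        ∑ e ∈ nbr Adj B, cap e = ∑ e ∈ nbr Adj A, cap e :=
      Finset.sum_sdiff hNBsub
    have hzero : ∑ e ∈ nbr Adj A \ nbr Adj B, cap e = 0 := by omega
    exact (Finset.sum_eq_zero_iff.1 hzero) e (Finset.mem_sdiff.2 ⟨heA, heB⟩)
  choose! B hB1 hB2 using key
  set U := (T \ S).biUnion B with hUdef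
  have hUtight : Tight cap Adj S U :=
    tight_biUnion cap Adj S hhallS (T \ S) B hB1
  have hUzero : ∀ x ∈ T \ S, ∀ e : ε, Adj x e → e ∉ nbr Adj U → cap e = 0 := by
    intro x hx e hadj heU
    refine hB2 x hx e hadj fun heB => heU ?_
    exact nbr_mono Adj (Finset.subset_biUnion_of_mem B hx) heB
  -- The contradiction set
  set A := (T \ S) ∪ (U ∩ T) with hAdef
  have hAsubT : A ⊆ T := by
    intro a ha
    rcases Finset.mem_union.1 ha with h | h
    · exact (Finset.mem_sdiff.1 h).1
    · exact (Finset.mem_inter.1 h).2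
  have hAcard := hhallT A hAsubT
  -- cap-weight of N(A) is at most that of N(U)
  have hwle : ∑ e ∈ nbr Adj A, cap e ≤ ∑ e ∈ nbr Adj U, cap e := by
    have hsplit : ∑ e ∈ nbr Adj A, cap e
        = ∑ e ∈ nbr Adj A \ nbr Adj U, cap e + ∑ e ∈ nbr Adj A ∩ nbr Adj U, cap e := by
      have h1 := Finset.sum_sdiff (f := cap)
        (Finset.inter_subset_left : nbr Adj A ∩ nbr Adj U ⊆ nbr Adj A)
      rw [Finset.sdiff_inter_self_left] at h1
      omega
    have hz : ∑ e ∈ nbr Adj A \ nbr Adj U, cap e = 0 := by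
      refine Finset.sum_eq_zero ?_
      intro e he
      obtain ⟨heA, heU⟩ := Finset.mem_sdiff.1 he
      obtain ⟨a, haA, hae⟩ := (mem_nbr _ _ _).1 heA
      rcases Finset.mem_union.1 haA with h | h
      · exact hUzero a h e hae heU
      · exact absurd ((mem_nbr _ _ _).2 ⟨a, (Finset.mem_inter.1 h).1, hae⟩) heU
    calc ∑ e ∈ nbr Adj A, cap e
        = ∑ e ∈ nbr Adj A ∩ nbr Adj U, cap e := by omega
      _ ≤ ∑ e ∈ nbr Adj U, cap e :=
          Finset.sum_le_sum_of_subset Finset.inter_subset_right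
  -- counting
  have hdisj : Disjoint (T \ S) (U ∩ T) := by
    refine Finset.disjoint_left.2 ?_
    intro a ha hb
    exact (Finset.mem_sdiff.1 ha).2 (hUtight.1 (Finset.mem_inter.1 hb).1)
  have hAcardeq : A.card = (T \ S).card + (U ∩ T).card :=
    Finset.card_union_of_disjoint hdisj
  have hUsplit : (U ∩ T).card + (U \ T).card = U.card :=
    Finset.card_inter_add_card_sdiff U T
  have hUT : (U \ T).card ≤ (S \ T).card :=
    Finset.card_le_card (Finset.sdiff_subset_sdiff hUtight.1 (le_refl _))
  have hTS : (S \ T).card < (T \ S).card := by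
    have h1 : (T \ S).card + (T ∩ S).card = T.card :=
      Finset.card_sdiff_add_card_inter T S
    have h2 : (S \ T).card + (S ∩ T).card = S.card :=
      Finset.card_sdiff_add_card_inter S T
    have h3 : (T ∩ S).card = (S ∩ T).card := by rw [Finset.inter_comm]
    omega
  have hUcard := hUtight.2
  omega
end

section
/- Let a finite capacitated bipartite assignment instance with item weights w : I → ℕ be given, and consider integral flows on the associated three-layer network. Then the maximum of cost(g, f) over all integral flows is attained by an integral flow whose value Σ_{e} g e is maximum among all integral flows. (Theorem 1, flow form: the MCMF network yields the maximum cost, i.e., the worst-case bound on B_i + W_i, when the flow is maximized.) -/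
/-!
Both the value and the cost of a flow depend only on the inflows of the item nodes: the value
is `∑ x, inflow x` and the cost is `∑ x, inflow x * w x`. Start from a flow of maximum cost and
compare it with a flow `f'` of maximum value. While the value is smaller, some effect `e` carries
less flow than in `f'`, so some edge `e → x` is used by `f'` but not by the current flow.
Rerouting item `x` to `e` (dropping the edge that fed `x` before, if any) gives a flow that is
still feasible, covers every item covered before, and disagrees with `f'` on fewer edges.
Since the inflows do not decrease, neither do value and cost, so after finitely many
reroutings we reach a flow of maximum value that still has maximum cost.
-/

/-- An integral flow on the three-layer network associated with a capacitated
bipartite assignment instance: `g e` is the flow from the source to effect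
node `e` (capacity `cap e`), `f e x` the flow from effect `e` to item `x`
(capacity 1, present only when `Adj x e`), with conservation at effect nodes
and inflow at most 1 at each item node (capacity of the item-to-sink edge). -/
def IsFlow {ι ε : Type*} [Fintype ι] [Fintype ε]
    (cap : ε → ℕ) (Adj : ι → ε → Prop) (g : ε → ℕ) (f : ε → ι → ℕ) : Prop :=
  (∀ e : ε, g e ≤ cap e) ∧
  (∀ e : ε, ∀ x : ι, f e x ≤ 1) ∧
  (∀ e : ε, ∀ x : ι, ¬ Adj x e → f e x = 0) ∧
  (∀ e : ε, ∑ x : ι, f e x = g e) ∧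
  (∀ x : ι, ∑ e : ε, f e x ≤ 1)

open Finset

lemma exists_forall_le_of_bounded {α : Type*} {P : α → Prop} (φ : α → ℕ) {B : ℕ}
    (hne : ∃ a, P a) (hB : ∀ a, P a → φ a ≤ B) : ∃ a, P a ∧ ∀ b, P b → φ b ≤ φ a := by
  have hbdd : BddAbove (φ '' {a | P a}) := ⟨B, by rintro _ ⟨a, ha, rfl⟩; exact hB a ha⟩
  obtain ⟨a, ha, hsup⟩ := Nat.sSup_mem (Set.image_nonempty.mpr hne) hbdd
  exact ⟨a, ha, fun b hb => hsup ▸ le_csSup hbdd ⟨b, hb, rfl⟩⟩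

section Flow

variable {ι ε : Type*}

section Reroute

variable [DecidableEq ι] [DecidableEq ε] {f : ε → ι → ℕ} {e : ε} {x : ι}

def reroute (f : ε → ι → ℕ) (e : ε) (x : ι) : ε → ι → ℕ :=
  fun e' x' => if x' = x then if e' = e then 1 else 0 else f e' x'

lemma reroute_le_of_ne {e' : ε} (he' : e' ≠ e) (x' : ι) : reroute f e x e' x' ≤ f e' x' := by
  unfold reroute
  split_ifs <;> simp

lemma sum_reroute_self [Fintype ι] (hfx : f e x = 0) :
    ∑ x', reroute f e x e x' = ∑ x', f e x' + 1 := by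
  have hpt : ∀ x', reroute f e x e x' = f e x' + if x' = x then 1 else 0 := fun x' => by
    by_cases hx' : x' = x <;> simp [reroute, hx', hfx]
  simp only [hpt, sum_add_distrib, sum_ite_eq', mem_univ, if_true]

end Reroute

section Inflow

variable [Fintype ε]

def inflow (f : ε → ι → ℕ) (x : ι) : ℕ := ∑ e, f e x

lemma eq_zero_of_inflow_le_one {f : ε → ι → ℕ} {x : ι} {e e' : ε} (hx : inflow f x ≤ 1)
    (he : f e x = 1) (hne : e' ≠ e) : f e' x = 0 := by
  have := add_le_sum (f := fun e => f e x) (fun _ _ => Nat.zero_le _) (mem_univ e)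
    (mem_univ e') hne.symm
  simp only [inflow] at hx
  omega

variable [DecidableEq ι] [DecidableEq ε] {f : ε → ι → ℕ} {e : ε} {x : ι}

lemma inflow_reroute_self : inflow (reroute f e x) x = 1 := by
  simp [inflow, reroute]

lemma inflow_reroute_of_ne {x' : ι} (hx' : x' ≠ x) : inflow (reroute f e x) x' = inflow f x' := by
  simp [inflow, reroute, hx']

lemma inflow_le_inflow_reroute (hx : inflow f x ≤ 1) (x' : ι) :
    inflow f x' ≤ inflow (reroute f e x) x' := by
  rcases eq_or_ne x' x with rfl | hx'
  · rwa [inflow_reroute_self]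
  · rw [inflow_reroute_of_ne hx']

end Inflow

variable [Fintype ι] [Fintype ε]

def deficit (f' f : ε → ι → ℕ) : ℕ := ∑ p : ε × ι, (f' p.1 p.2 - f p.1 p.2)

lemma deficit_reroute_lt [DecidableEq ι] [DecidableEq ε] {f f' : ε → ι → ℕ} {e : ε} {x : ι}
    (hf'x : f' e x = 1) (hfx : f e x = 0) (hcol : ∀ e' ≠ e, f' e' x = 0) :
    deficit f' (reroute f e x) < deficit f' f := by
  refine sum_lt_sum (fun ⟨e', x'⟩ _ => ?_) ⟨(e, x), mem_univ _, by simp [reroute, hf'x, hfx]⟩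
  dsimp only [reroute]
  split_ifs with hx' he'
  · subst hx' he'; omega
  · subst hx'; simp [hcol e' he']
  · exact le_rfl

lemma sum_sum_mul_eq_sum_inflow_mul (f : ε → ι → ℕ) (w : ι → ℕ) :
    ∑ e, ∑ x, f e x * w x = ∑ x, inflow f x * w x := by
  rw [sum_comm]
  simp only [inflow, sum_mul]

variable {cap : ε → ℕ} {Adj : ι → ε → Prop} {g g' : ε → ℕ} {f f' : ε → ι → ℕ}

lemma isFlow_zero : IsFlow cap Adj (fun _ => 0) (fun _ _ => 0) := by
  refine ⟨fun _ => Nat.zero_le _, fun _ _ => Nat.zero_le _, fun _ _ _ => rfl, ?_, ?_⟩ <;> simp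

lemma exists_isFlow_forall_le (φ : (ε → ℕ) → (ε → ι → ℕ) → ℕ) {B : ℕ}
    (hB : ∀ g f, IsFlow cap Adj g f → φ g f ≤ B) :
    ∃ g f, IsFlow cap Adj g f ∧ ∀ g' f', IsFlow cap Adj g' f' → φ g' f' ≤ φ g f := by
  obtain ⟨⟨g, f⟩, hf, hmax⟩ :=
    exists_forall_le_of_bounded (P := fun p : (ε → ℕ) × (ε → ι → ℕ) => IsFlow cap Adj p.1 p.2)
      (fun p => φ p.1 p.2) ⟨(_, _), isFlow_zero⟩ fun p => hB p.1 p.2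
  exact ⟨g, f, hf, fun g' f' h => hmax (g', f') h⟩

namespace IsFlow

lemma inflow_le_one (hf : IsFlow cap Adj g f) (x : ι) : inflow f x ≤ 1 := hf.2.2.2.2 x

lemma sum_le_sum_cap (hf : IsFlow cap Adj g f) : ∑ e, g e ≤ ∑ e, cap e :=
  sum_le_sum fun e _ => hf.1 e

lemma cost_le_sum_weight (hf : IsFlow cap Adj g f) (w : ι → ℕ) :
    ∑ e, ∑ x, f e x * w x ≤ ∑ x, w x := by
  rw [sum_sum_mul_eq_sum_inflow_mul]
  exact sum_le_sum fun x _ => (Nat.mul_le_mul_right _ (hf.inflow_le_one x)).trans_eq (one_mul _)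

lemma isFlow_reroute [DecidableEq ι] [DecidableEq ε] (hf : IsFlow cap Adj g f) {e : ε} {x : ι}
    (hcap : g e < cap e) (hadj : Adj x e) (hfx : f e x = 0) :
    IsFlow cap Adj (fun e' => ∑ x', reroute f e x e' x') (reroute f e x) := by
  obtain ⟨hcapf, hle, hadjf, hcons, -⟩ := id hf
  refine ⟨fun e' => ?_, fun e' x' => ?_, fun e' x' hna => ?_, fun _ => rfl, fun x' => ?_⟩
  · rcases eq_or_ne e' e with rfl | he'
    · dsimp only; rw [sum_reroute_self hfx, hcons]; omega
    · exact (sum_le_sum fun x' _ => reroute_le_of_ne he' x').trans ((hcons e').trans_le (hcapf e'))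
  · unfold reroute; split_ifs <;> simp [hle]
  · unfold reroute
    split_ifs with hx' he'
    · subst hx' he'; exact absurd hadj hna
    · rfl
    · exact hadjf e' x' hna
  · change inflow _ x' ≤ 1
    rcases eq_or_ne x' x with rfl | hx'
    · rw [inflow_reroute_self]
    · rw [inflow_reroute_of_ne hx']; exact hf.inflow_le_one x'

lemma exists_edge_of_sum_lt (hf : IsFlow cap Adj g f) (hf' : IsFlow cap Adj g' f')
    (hlt : ∑ e, g e < ∑ e, g' e) : ∃ e x, g e < cap e ∧ Adj x e ∧ f e x = 0 ∧ f' e x = 1 := by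
  obtain ⟨e, -, he⟩ := exists_lt_of_sum_lt hlt
  obtain ⟨x, -, hx⟩ := exists_lt_of_sum_lt (show ∑ x, f e x < ∑ x, f' e x by
    rw [hf.2.2.2.1, hf'.2.2.2.1]; exact he)
  have hf'x : f' e x = 1 := by have := hf'.2.1 e x; omega
  refine ⟨e, x, he.trans_le (hf'.1 e), by_contra fun hna => ?_, by omega, hf'x⟩
  simp [hf'.2.2.1 e x hna] at hf'x

lemma exists_sum_ge_inflow_ge (hf : IsFlow cap Adj g f) (hf' : IsFlow cap Adj g' f') :
    ∃ G F, IsFlow cap Adj G F ∧ ∑ e, g' e ≤ ∑ e, G e ∧ ∀ x, inflow f x ≤ inflow F x := by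
  classical
  induction hd : deficit f' f using Nat.strong_induction_on generalizing g f with
  | _ n ih =>
  by_cases hle : ∑ e, g' e ≤ ∑ e, g e
  · exact ⟨g, f, hf, hle, fun _ => le_rfl⟩
  obtain ⟨e, x, hcap, hadj, hfx, hf'x⟩ := hf.exists_edge_of_sum_lt hf' (not_le.mp hle)
  have hlt := deficit_reroute_lt hf'x hfx fun _ he' =>
    eq_zero_of_inflow_le_one (hf'.inflow_le_one x) hf'x he'
  obtain ⟨G, F, hF, hval, hin⟩ := ih _ (hd ▸ hlt) (hf.isFlow_reroute hcap hadj hfx) rfl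
  exact ⟨G, F, hF, hval,
    fun x' => (inflow_le_inflow_reroute (hf.inflow_le_one x) x').trans (hin x')⟩

end IsFlow

end Flow

/-- Theorem 1, flow form: the maximum of the cost over all integral flows on the
three-layer network is attained by an integral flow of maximum value. -/
theorem max_cost_attained_at_max_flow {ι ε : Type*} [Fintype ι] [Fintype ε]
    (cap : ε → ℕ) (Adj : ι → ε → Prop) (w : ι → ℕ) :
    ∃ (g : ε → ℕ) (f : ε → ι → ℕ), IsFlow cap Adj g f ∧
      (∀ (g' : ε → ℕ) (f' : ε → ι → ℕ), IsFlow cap Adj g' f' →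
        ∑ e : ε, g' e ≤ ∑ e : ε, g e) ∧
      (∀ (g' : ε → ℕ) (f' : ε → ι → ℕ), IsFlow cap Adj g' f' →
        ∑ e : ε, ∑ x : ι, f' e x * w x ≤ ∑ e : ε, ∑ x : ι, f e x * w x) := by
  obtain ⟨gv, fv, hv, hv_max⟩ := exists_isFlow_forall_le (cap := cap) (Adj := Adj)
    (fun g _ => ∑ e, g e) fun _ _ hf => hf.sum_le_sum_cap
  obtain ⟨gc, fc, hc, hc_max⟩ := exists_isFlow_forall_le (cap := cap) (Adj := Adj)
    (fun _ f => ∑ e, ∑ x, f e x * w x) fun _ _ hf => hf.cost_le_sum_weight w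
  obtain ⟨G, F, hF, hval, hin⟩ := hc.exists_sum_ge_inflow_ge hv
  refine ⟨G, F, hF, fun g' f' h => (hv_max g' f' h).trans hval,
    fun g' f' h => (hc_max g' f' h).trans ?_⟩
  simp only [sum_sum_mul_eq_sum_inflow_mul]
  gcongr with x
  exact hin x
end

section
/- There exists a finite capacitated bipartite assignment instance with item weights w : I → ℕ and a distinguished effect β of capacity 1 such that: (i) every feasible assignment that maximizes the total weight of items assigned to β has total weight strictly less than the maximum total weight over all feasible assignments, and (ii) every feasible assignment that maximizes the total weight of items assigned to effects other than β also has total weight strictly less than the maximum total weight over all feasible assignments. -/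
/-- `(S, φ)` is a feasible assignment for the capacitated bipartite assignment
instance given by `cap` and `Adj`: each item of `S` is assigned to an adjacent
effect and each effect `e` receives at most `cap e` items. -/
def FeasAssign {n m : ℕ} (cap : Fin m → ℕ) (Adj : Fin n → Fin m → Prop)
    (S : Finset (Fin n)) (φ : Fin n → Fin m) : Prop :=
  (∀ x ∈ S, Adj x (φ x)) ∧
    ∀ e : Fin m, (S.filter (fun x => φ x = e)).card ≤ cap e

namespace SepBound

def A : Fin 4 → Fin 3 → Bool :=
  ![![true, true, false], ![false, true, false], ![true, false, true], ![false, false, true]]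

def wt : Fin 4 → ℕ := ![5, 3, 6, 2]

lemma small_sum_le {F : Finset (Fin 4)} {c : ℕ} (hcard : F.card ≤ 1)
    (hb : ∀ x ∈ F, wt x ≤ c) : ∑ x ∈ F, wt x ≤ c := by
  calc ∑ x ∈ F, wt x ≤ F.card • c := Finset.sum_le_card_nsmul _ _ _ hb
    _ = F.card * c := by simp
    _ ≤ 1 * c := Nat.mul_le_mul_right _ hcard
    _ = c := one_mul c

lemma small_sum_eq {F : Finset (Fin 4)} {c : ℕ} (hcard : F.card ≤ 1)
    (hpos : 0 < c) (hge : c ≤ ∑ x ∈ F, wt x) :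
    ∃ a, F = {a} ∧ c ≤ wt a := by
  rcases Finset.eq_empty_or_nonempty F with h | h
  · simp [h] at hge; omega
  · have : F.card = 1 := le_antisymm hcard (Finset.one_le_card.mpr h)
    obtain ⟨a, ha⟩ := Finset.card_eq_one.mp this
    exact ⟨a, ha, by simpa [ha] using hge⟩

lemma total_split (S : Finset (Fin 4)) (φ : Fin 4 → Fin 3) :
    ∑ x ∈ S, wt x = ∑ x ∈ S.filter (fun x => φ x = 0), wt x
      + (∑ x ∈ S.filter (fun x => φ x = 1), wt x
        + ∑ x ∈ S.filter (fun x => φ x = 2), wt x) := by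
  have := Finset.sum_fiberwise_of_maps_to (g := φ) (f := wt)
    (fun x (_ : x ∈ S) => Finset.mem_univ (φ x))
  rw [← this, Fin.sum_univ_three, Nat.add_assoc]

lemma fiber_bound (S : Finset (Fin 4)) (φ : Fin 4 → Fin 3)
    (hF : FeasAssign (fun _ => 1) (fun x e => A x e = true) S φ) (e : Fin 3) (c : ℕ)
    (hb : ∀ x, A x e = true → wt x ≤ c) :
    ∑ x ∈ S.filter (fun x => φ x = e), wt x ≤ c := by
  refine small_sum_le (hF.2 e) ?_
  intro x hx
  rw [Finset.mem_filter] at hx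
  exact hb x (hx.2 ▸ hF.1 x hx.1)

lemma fiber1_le (S : Finset (Fin 4)) (φ : Fin 4 → Fin 3)
    (hF : FeasAssign (fun _ => 1) (fun x e => A x e = true) S φ) :
    ∑ x ∈ S.filter (fun x => φ x = 1), wt x ≤ 5 :=
  fiber_bound S φ hF 1 5 (by decide)

-- key lemma 1: if β-weight ≥ 6 then total ≤ 13
lemma key1 (S : Finset (Fin 4)) (φ : Fin 4 → Fin 3)
    (hF : FeasAssign (fun _ => 1) (fun x e => A x e = true) S φ)
    (hβ : 6 ≤ ∑ x ∈ S.filter (fun x => φ x = 0), wt x) :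
    ∑ x ∈ S, wt x ≤ 13 := by
  -- the β-fiber must be {2}
  obtain ⟨a, ha, hwa⟩ := small_sum_eq (hF.2 0) (by norm_num) hβ
  have ha2 : a ∈ S.filter (fun x => φ x = 0) := ha ▸ Finset.mem_singleton_self a
  rw [Finset.mem_filter] at ha2
  have hadj : A a 0 = true := ha2.2 ▸ hF.1 a ha2.1
  have hae : a = 2 := by fin_cases a <;> simp_all [A, wt]
  subst hae
  -- β fiber weight = 6
  have h0 : ∑ x ∈ S.filter (fun x => φ x = 0), wt x ≤ 6 :=
    fiber_bound S φ hF 0 6 (by decide)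
  -- δ fiber weight ≤ 2 since item 2 is taken by β
  have h2 : ∑ x ∈ S.filter (fun x => φ x = 2), wt x ≤ 2 := by
    refine small_sum_le (hF.2 2) ?_
    intro x hx
    rw [Finset.mem_filter] at hx
    have hadjx : A x 2 = true := hx.2 ▸ hF.1 x hx.1
    have hx2 : x ≠ 2 := by
      intro h; subst h; rw [ha2.2] at hx; exact absurd hx.2 (by decide)
    fin_cases x <;> simp_all [A, wt]
  have h1 := fiber1_le S φ hF
  rw [total_split S φ]
  omega

-- key lemma 2: if non-β-weight ≥ 11 then total ≤ 11
lemma key2 (S : Finset (Fin 4)) (φ : Fin 4 → Fin 3)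
    (hF : FeasAssign (fun _ => 1) (fun x e => A x e = true) S φ)
    (hnb : 11 ≤ ∑ x ∈ S.filter (fun x => φ x ≠ 0), wt x) :
    ∑ x ∈ S, wt x ≤ 11 := by
  have hsplit : ∑ x ∈ S.filter (fun x => φ x ≠ 0), wt x
      = ∑ x ∈ S.filter (fun x => φ x = 1), wt x
        + ∑ x ∈ S.filter (fun x => φ x = 2), wt x := by
    have h1 := Finset.sum_filter_add_sum_filter_not S (fun x => φ x = 0) wt
    have := total_split S φ
    simp only [ne_eq]
    omega
  have h1 := fiber1_le S φ hF
  have h2 : ∑ x ∈ S.filter (fun x => φ x = 2), wt x ≤ 6 :=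
    fiber_bound S φ hF 2 6 (by decide)
  -- forces γ fiber = {0} and δ fiber = {2}
  have hγ : 5 ≤ ∑ x ∈ S.filter (fun x => φ x = 1), wt x := by omega
  have hδ : 6 ≤ ∑ x ∈ S.filter (fun x => φ x = 2), wt x := by omega
  obtain ⟨a, ha, hwa⟩ := small_sum_eq (hF.2 1) (by norm_num) hγ
  obtain ⟨b, hb, hwb⟩ := small_sum_eq (hF.2 2) (by norm_num) hδ
  have ha2 : a ∈ S.filter (fun x => φ x = 1) := ha ▸ Finset.mem_singleton_self a
  have hb2 : b ∈ S.filter (fun x => φ x = 2) := hb ▸ Finset.mem_singleton_self b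
  rw [Finset.mem_filter] at ha2 hb2
  have hadja : A a 1 = true := ha2.2 ▸ hF.1 a ha2.1
  have hadjb : A b 2 = true := hb2.2 ▸ hF.1 b hb2.1
  have hae : a = 0 := by fin_cases a <;> simp_all [A, wt]
  have hbe : b = 2 := by fin_cases b <;> simp_all [A, wt]
  subst hae; subst hbe
  -- β fiber is empty
  have h0 : ∑ x ∈ S.filter (fun x => φ x = 0), wt x ≤ 0 := by
    refine small_sum_le (hF.2 0) ?_
    intro x hx
    rw [Finset.mem_filter] at hx
    have hadjx : A x 0 = true := hx.2 ▸ hF.1 x hx.1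
    have hx0 : x ≠ 0 := by
      intro h; subst h; rw [ha2.2] at hx; exact absurd hx.2 (by decide)
    have hx2 : x ≠ 2 := by
      intro h; subst h; rw [hb2.2] at hx; exact absurd hx.2 (by decide)
    fin_cases x <;> simp_all [A, wt]
  rw [total_split S φ]
  omega

end SepBound

/-- There is a capacitated bipartite assignment instance with a distinguished
effect `β` of capacity 1 such that: (i) every feasible assignment maximizing the
weight assigned to `β` has total weight strictly below the maximum total weight,
and (ii) the same holds for every feasible assignment maximizing the weight
assigned to effects other than `β`. (Bounding `B_i` and `W_i` separately, in
either order, can fail to yield the worst-case bound on `B_i + W_i`.) -/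
theorem separate_bounding_suboptimal :
    ∃ (n m : ℕ) (cap : Fin m → ℕ) (Adj : Fin n → Fin m → Prop)
      (w : Fin n → ℕ) (β : Fin m),
      cap β = 1 ∧
      (∀ (S : Finset (Fin n)) (φ : Fin n → Fin m), FeasAssign cap Adj S φ →
        (∀ (S' : Finset (Fin n)) (φ' : Fin n → Fin m), FeasAssign cap Adj S' φ' →
          ∑ x ∈ S'.filter (fun x => φ' x = β), w x ≤
            ∑ x ∈ S.filter (fun x => φ x = β), w x) →
        ∃ (S' : Finset (Fin n)) (φ' : Fin n → Fin m),
          FeasAssign cap Adj S' φ' ∧ ∑ x ∈ S, w x < ∑ x ∈ S', w x) ∧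
      (∀ (S : Finset (Fin n)) (φ : Fin n → Fin m), FeasAssign cap Adj S φ →
        (∀ (S' : Finset (Fin n)) (φ' : Fin n → Fin m), FeasAssign cap Adj S' φ' →
          ∑ x ∈ S'.filter (fun x => φ' x ≠ β), w x ≤
            ∑ x ∈ S.filter (fun x => φ x ≠ β), w x) →
        ∃ (S' : Finset (Fin n)) (φ' : Fin n → Fin m),
          FeasAssign cap Adj S' φ' ∧ ∑ x ∈ S, w x < ∑ x ∈ S', w x) := by
  refine ⟨4, 3, fun _ => 1, fun x e => SepBound.A x e = true, SepBound.wt, 0, rfl, ?_, ?_⟩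
  · intro S φ hF hmax
    have h6 := hmax {2} (fun _ => 0) ⟨by decide, by decide⟩
    have hβ : 6 ≤ ∑ x ∈ S.filter (fun x => φ x = 0), SepBound.wt x := by
      refine le_trans (le_of_eq ?_) h6; decide
    refine ⟨{0, 1, 2}, ![0, 1, 2, 2], ⟨by decide, by decide⟩, ?_⟩
    have h13 := SepBound.key1 S φ hF hβ
    have h14 : ∑ x ∈ ({0, 1, 2} : Finset (Fin 4)), SepBound.wt x = 14 := by decide
    omega
  · intro S φ hF hmax
    have h11 := hmax {0, 2} ![1, 1, 2, 2] ⟨by decide, by decide⟩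
    have hnb : 11 ≤ ∑ x ∈ S.filter (fun x => φ x ≠ 0), SepBound.wt x := by
      refine le_trans (le_of_eq ?_) h11; decide
    refine ⟨{0, 1, 2}, ![0, 1, 2, 2], ⟨by decide, by decide⟩, ?_⟩
    have h11' := SepBound.key2 S φ hF hnb
    have h14 : ∑ x ∈ ({0, 1, 2} : Finset (Fin 4)), SepBound.wt x = 14 := by decide
    omega
end
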